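/- arXiv:1912.12293 — 3 statements merged into one kernel-verified Lean document; each statement's English description precedes it below -/
import Mathlib

section
/- Let P(λ) = [[A(λ), B(λ)], [-C(λ), D(λ)]] be a polynomial system matrix with A(λ) regular of size n×n and transfer function G(λ) = D(λ) + C(λ)A(λ)^{-1}B(λ). If the columns of the stacked polynomial matrix [H_1(λ); H_2(λ)] form a basis (over F(λ)) of the right null-space of P(λ) consisting of vector polynomials, then H_2(λ) is a right polynomial basis of G(λ) and H_1(λ) = -A(λ)^{-1}B(λ)H_2(λ). -/
/-!
Since `A` is invertible over `F(λ)`, `P [x; y] = 0` holds iff `x = -A⁻¹ B y` and `G y = 0`.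
Hence the projection `[x; y] ↦ y` is injective on the null-space of `P` and maps it onto the
null-space of `G`, so it carries the basis `[H₁; H₂]` to the basis `H₂`, and each column of `H₁`
is `-A⁻¹ B` times the corresponding column of `H₂`.
-/

open Polynomial Matrix

noncomputable section

variable {F : Type*} [Field F]

/-- The natural embedding of a polynomial matrix into the rational functions. -/
def toRF {a b : Type*} (M : Matrix a b (Polynomial F)) : Matrix a b (RatFunc F) :=
  M.map (algebraMap (Polynomial F) (RatFunc F))

/-- The columns of the polynomial matrix `N`, regarded as rational vectors, form a basis of
the right null-space of the rational matrix `M`. -/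
def IsRightPolyBasis {a b : Type*} [Fintype a] [Fintype b] {l : ℕ}
    (M : Matrix a b (RatFunc F)) (N : Matrix b (Fin l) (Polynomial F)) : Prop :=
  LinearIndependent (RatFunc F) (fun j : Fin l => (toRF N)ᵀ j) ∧
    Submodule.span (RatFunc F) (Set.range fun j : Fin l => (toRF N)ᵀ j) =
      LinearMap.ker M.mulVecLin

namespace Matrix

variable {R : Type*} [CommRing R] {ι κ o : Type*} [Fintype ι] [DecidableEq ι] [Fintype κ]
  {A : Matrix ι ι R} (B : Matrix ι κ R) (C : Matrix o ι R) (D : Matrix o κ R)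

theorem fromBlocks_mulVec_sumElim_eq_zero_iff (hA : IsUnit A.det) (x : ι → R) (y : κ → R) :
    fromBlocks A B (-C) D *ᵥ Sum.elim x y = 0 ↔
      x = -((A⁻¹ * B) *ᵥ y) ∧ (D + C * A⁻¹ * B) *ᵥ y = 0 := by
  have hx : A *ᵥ x + B *ᵥ y = 0 ↔ x = -((A⁻¹ * B) *ᵥ y) := by
    constructor
    · intro h
      rw [← mulVec_mulVec, ← mulVec_neg, ← eq_neg_iff_add_eq_zero.mpr h, mulVec_mulVec,
        nonsing_inv_mul A hA, one_mulVec]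
    · rintro rfl
      rw [mulVec_neg, mulVec_mulVec, ← Matrix.mul_assoc, mul_nonsing_inv A hA, Matrix.one_mul,
        neg_add_cancel]
  rw [fromBlocks_mulVec, Sum.elim_comp_inl, Sum.elim_comp_inr, ← Sum.elim_zero_zero,
    Sum.elim_eq_iff, hx]
  refine and_congr_right fun hx => ?_
  rw [hx, neg_mulVec, mulVec_neg, neg_neg, mulVec_mulVec, add_mulVec, add_comm, ← Matrix.mul_assoc]

theorem disjoint_ker_fromBlocks_ker_funLeft_inr (hA : IsUnit A.det) :
    Disjoint (LinearMap.ker (fromBlocks A B (-C) D).mulVecLin)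
      (LinearMap.ker (LinearMap.funLeft R R (Sum.inr : κ → ι ⊕ κ))) := by
  refine Submodule.disjoint_def.mpr fun w hw hinr => ?_
  rw [LinearMap.mem_ker, mulVecLin_apply, ← Sum.elim_comp_inl_inr w,
    fromBlocks_mulVec_sumElim_eq_zero_iff B C D hA] at hw
  change w ∘ Sum.inr = 0 at hinr
  rw [← Sum.elim_comp_inl_inr w, hw.1, hinr, mulVec_zero, neg_zero, Sum.elim_zero_zero]

theorem map_funLeft_inr_ker_fromBlocks (hA : IsUnit A.det) :
    (LinearMap.ker (fromBlocks A B (-C) D).mulVecLin).map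
        (LinearMap.funLeft R R (Sum.inr : κ → ι ⊕ κ)) =
      LinearMap.ker (D + C * A⁻¹ * B).mulVecLin := by
  ext y
  simp only [Submodule.mem_map, LinearMap.mem_ker, mulVecLin_apply]
  constructor
  · rintro ⟨w, hw, rfl⟩
    rw [← Sum.elim_comp_inl_inr w, fromBlocks_mulVec_sumElim_eq_zero_iff B C D hA] at hw
    exact hw.2
  · intro hy
    exact ⟨Sum.elim (-((A⁻¹ * B) *ᵥ y)) y,
      (fromBlocks_mulVec_sumElim_eq_zero_iff B C D hA _ y).mpr ⟨rfl, hy⟩, rfl⟩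

end Matrix

theorem LinearIndependent.map_and_span_eq {R M N ι : Type*} [Ring R] [AddCommGroup M]
    [AddCommGroup N] [Module R M] [Module R N] {v : ι → M} {S : Submodule R M}
    {T : Submodule R N} (f : M →ₗ[R] N) (hv : LinearIndependent R v)
    (hspan : Submodule.span R (Set.range v) = S) (hdisj : Disjoint S (LinearMap.ker f))
    (hmap : S.map f = T) :
    LinearIndependent R (f ∘ v) ∧ Submodule.span R (Set.range (f ∘ v)) = T :=
  ⟨hv.map (hspan ▸ hdisj), by rw [Set.range_comp, Submodule.span_image, hspan, hmap]⟩

section toRF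

variable {a b c : Type*}

theorem toRF_fromBlocks {a' b' : Type*} (A : Matrix a b F[X]) (B : Matrix a b' F[X])
    (C : Matrix a' b F[X]) (D : Matrix a' b' F[X]) :
    toRF (fromBlocks A B C D) = fromBlocks (toRF A) (toRF B) (toRF C) (toRF D) :=
  fromBlocks_map ..

theorem toRF_neg (A : Matrix a b F[X]) : toRF (-A) = -toRF A :=
  Matrix.map_neg _ (map_neg _) A

theorem transpose_toRF_fromRows_apply (H₁ : Matrix a c F[X]) (H₂ : Matrix b c F[X]) (j : c) :
    (toRF (fromRows H₁ H₂))ᵀ j = Sum.elim ((toRF H₁)ᵀ j) ((toRF H₂)ᵀ j) := by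
  ext (i | i) <;> rfl

theorem isUnit_det_toRF [Fintype a] [DecidableEq a] {A : Matrix a a F[X]} (hA : A.det ≠ 0) :
    IsUnit (toRF A).det := by
  change IsUnit ((algebraMap F[X] (RatFunc F)).mapMatrix A).det
  rw [← RingHom.map_det, isUnit_iff_ne_zero]
  exact (map_ne_zero_iff _ (IsFractionRing.injective F[X] (RatFunc F))).mpr hA

end toRF

/-- If the columns of the stacked polynomial matrix `[H₁; H₂]` form a basis
of the right null-space of the polynomial system matrix `P = [[A,B],[-C,D]]`, then `H₂` is a
right polynomial basis of the transfer function `G = D + C A⁻¹ B` and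
`H₁ = -A⁻¹ B H₂`. -/
theorem rightPolyBasis_of_polynomialSystemMatrix
    {n p m l : ℕ}
    (A : Matrix (Fin n) (Fin n) (Polynomial F))
    (B : Matrix (Fin n) (Fin m) (Polynomial F))
    (C : Matrix (Fin p) (Fin n) (Polynomial F))
    (D : Matrix (Fin p) (Fin m) (Polynomial F))
    (hA : A.det ≠ 0)
    (G : Matrix (Fin p) (Fin m) (RatFunc F))
    (hG : G = toRF D + toRF C * (toRF A)⁻¹ * toRF B)
    (P : Matrix (Fin n ⊕ Fin p) (Fin n ⊕ Fin m) (RatFunc F))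
    (hP : P = toRF (Matrix.fromBlocks A B (-C) D))
    (H₁ : Matrix (Fin n) (Fin l) (Polynomial F))
    (H₂ : Matrix (Fin m) (Fin l) (Polynomial F))
    (hbasis : IsRightPolyBasis P (Matrix.fromRows H₁ H₂)) :
    IsRightPolyBasis G H₂ ∧
      toRF H₁ = -((toRF A)⁻¹ * toRF B * toRF H₂) := by
  have hA' := isUnit_det_toRF hA
  rw [toRF_fromBlocks, toRF_neg] at hP
  subst hP hG
  obtain ⟨hli, hspan⟩ := hbasis
  simp only [transpose_toRF_fromRows_apply] at hli hspan
  have hcol (j : Fin l) := (fromBlocks_mulVec_sumElim_eq_zero_iff (toRF B) (toRF C) (toRF D) hA'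
    _ _).mp (LinearMap.mem_ker.mp (hspan ▸ Submodule.subset_span (Set.mem_range_self j)))
  have hH₂ := hli.map_and_span_eq (LinearMap.funLeft _ _ (Sum.inr : Fin m → Fin n ⊕ Fin m))
    hspan (disjoint_ker_fromBlocks_ker_funLeft_inr _ _ _ hA')
    (map_funLeft_inr_ker_fromBlocks _ _ _ hA')
  refine ⟨hH₂, ?_⟩
  ext i j
  exact congrFun (hcol j).1 i

end
end

section
/- The columns of a polynomial matrix N(λ) ∈ F[λ]^{m×l} form a minimal basis of the subspace of F(λ)^m they span if and only if N(λ_0) has full column rank for all λ_0 in the algebraic closure of F and N(λ) is column reduced (its highest column degree coefficient matrix has full column rank l). -/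
open Polynomial Matrix

noncomputable section

variable {F : Type*} [Field F]

/-- Degree (as a natural number) of the `j`-th column of a polynomial matrix. -/
def colDegNat {a : Type*} [Fintype a] {l : ℕ} (N : Matrix a (Fin l) (Polynomial F))
    (j : Fin l) : ℕ :=
  Finset.univ.sup fun i => (N i j).natDegree

/-- The order of a polynomial matrix: the sum of its column degrees. -/
def matOrder {a : Type*} [Fintype a] {l : ℕ} (N : Matrix a (Fin l) (Polynomial F)) : ℕ :=
  ∑ j, colDegNat N j

/-- The span over `F(λ)` of the columns of a polynomial matrix. -/
def spanCols {a : Type*} {l : ℕ} (N : Matrix a (Fin l) (Polynomial F)) :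
    Submodule (RatFunc F) (a → RatFunc F) :=
  Submodule.span (RatFunc F) (Set.range fun j : Fin l => (toRF N)ᵀ j)

/-- `N` is a minimal basis of the subspace `V`: its columns are linearly independent vector
polynomials spanning `V`, of least order among all such polynomial bases of `V`. -/
def IsMinimalBasisOf {a : Type*} [Fintype a] {l : ℕ}
    (V : Submodule (RatFunc F) (a → RatFunc F)) (N : Matrix a (Fin l) (Polynomial F)) : Prop :=
  LinearIndependent (RatFunc F) (fun j : Fin l => (toRF N)ᵀ j) ∧ spanCols N = V ∧
    ∀ (l' : ℕ) (N' : Matrix a (Fin l') (Polynomial F)),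
      LinearIndependent (RatFunc F) (fun j : Fin l' => (toRF N')ᵀ j) → spanCols N' = V →
        matOrder N ≤ matOrder N'

/-- The highest column degree coefficient matrix of a polynomial matrix. -/
def highestColCoeff {a : Type*} [Fintype a] {l : ℕ} (N : Matrix a (Fin l) (Polynomial F)) :
    Matrix a (Fin l) F :=
  Matrix.of fun i j => (N i j).coeff (colDegNat N j)

/-!
Column reducedness gives the predictable degree property: the degree of `N p` is the largest
`deg pⱼ + dⱼ`. It makes the columns independent and, for any other basis `N Q` of the same space,
forces each column degree of `N Q` to dominate some `d_{σ k}`, with `σ` read off a nonzero term of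
`det Q`. That every other polynomial basis has the form `N Q` with `Q` polynomial is where full rank
at every `λ₀` enters, in its divisibility form `g ∣ N p → g ∣ p`.

Conversely, a failure of either condition yields a polynomial vector `u = N s` with `s j ≠ 0` and
degree below `dⱼ`: from a kernel vector of `N_h`, or from a kernel vector of `N` modulo the minimal
polynomial of `λ₀`. Exchanging `u` for column `j` lowers the order.
-/

namespace Matrix

variable {K L : Type*} [Field K] [Field L] {ι κ : Type*}

theorem rank_eq_iff_mulVec_injective {n : ℕ} (M : Matrix ι (Fin n) K) :
    M.rank = n ↔ Function.Injective M.mulVec := by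
  rw [mulVec_injective_iff, rank_eq_finrank_span_cols, linearIndependent_iff_card_eq_finrank_span,
    Fintype.card_fin, eq_comm]
  rfl

theorem mulVec_map_injective_iff [Finite ι] [Fintype κ] (f : K →+* L) (M : Matrix ι κ K) :
    Function.Injective (M.map f).mulVec ↔ Function.Injective M.mulVec := by
  let := f.toAlgebra
  rw [mulVec_injective_iff, mulVec_injective_iff]
  exact linearIndependent_algebraMap_comp_iff

theorem exists_perm_forall_ne_zero_of_det_ne_zero [Fintype κ] [DecidableEq κ] {R : Type*}
    [CommRing R] {M : Matrix κ κ R} (hM : M.det ≠ 0) : ∃ σ : Equiv.Perm κ, ∀ k, M (σ k) k ≠ 0 := by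
  by_contra! h
  refine hM (det_apply M ▸ Finset.sum_eq_zero fun σ _ => ?_)
  obtain ⟨k, hk⟩ := h σ
  rw [Finset.prod_eq_zero (f := fun i => M (σ i) i) (Finset.mem_univ k) hk, smul_zero]

theorem col_updateCol [DecidableEq κ] {α : Type*} (M : Matrix ι κ α) (j : κ) (c : ι → α) :
    (M.updateCol j c).col = Function.update M.col j c := by
  rw [col, ← updateRow_transpose]
  rfl

theorem linearIndependent_col_updateCol_mulVec [Fintype κ] [DecidableEq κ] {M : Matrix ι κ K}
    (hM : LinearIndependent K M.col) {s : κ → K} {j : κ} (hs : s j ≠ 0) :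
    LinearIndependent K (M.updateCol j (M *ᵥ s)).col := by
  rw [col_updateCol]
  refine hM.update j _ ⟨1, one_mem _, Finsupp.equivFunOnFinite.symm s,
    mem_nonZeroDivisors_of_ne_zero hs, ?_⟩
  rw [one_smul, Finsupp.linearCombination_apply, Finsupp.sum_fintype _ _ (by simp), mulVec_eq_sum]
  simp [col]

theorem mulVec_map_mk_injective_iff [Fintype κ] {R : Type*} [CommRing R] (π : R[X])
    (N : Matrix ι κ R[X]) :
    Function.Injective (N.map (AdjoinRoot.mk π)).mulVec ↔
      ∀ p : κ → R[X], (∀ i, π ∣ (N *ᵥ p) i) → ∀ j, π ∣ p j := by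
  have hmk (p : κ → R[X]) :
      N.map (AdjoinRoot.mk π) *ᵥ (AdjoinRoot.mk π ∘ p) = AdjoinRoot.mk π ∘ (N *ᵥ p) :=
    funext fun i => (RingHom.map_mulVec _ _ _ _).symm
  rw [← coe_mulVecLin, injective_iff_map_eq_zero]
  constructor
  · intro h p hp j
    refine AdjoinRoot.mk_eq_zero.1 (congrFun (h (AdjoinRoot.mk π ∘ p) ?_) j)
    rw [mulVecLin_apply, hmk]
    exact funext fun i => AdjoinRoot.mk_eq_zero.2 (hp i)
  · intro h c hc
    obtain ⟨p, rfl⟩ := AdjoinRoot.mk_surjective.comp_left c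
    rw [mulVecLin_apply, hmk] at hc
    exact funext fun j => AdjoinRoot.mk_eq_zero.2 <|
      h p (fun i => AdjoinRoot.mk_eq_zero.1 (congrFun hc i)) j

theorem mulVec_map_aeval_injective_iff [Finite ι] [Fintype κ] [Algebra F L]
    {π : F[X]} (hπ : Irreducible π) {x : L} (hx : aeval x π = 0) (N : Matrix ι κ F[X]) :
    Function.Injective (N.map (aeval x)).mulVec ↔
      ∀ p : κ → F[X], (∀ i, π ∣ (N *ᵥ p) i) → ∀ j, π ∣ p j := by
  have := Fact.mk hπ
  have hN : N.map (aeval x) = (N.map (AdjoinRoot.mk π)).map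
      (AdjoinRoot.lift (algebraMap F L) x (by rwa [← aeval_def])) := by
    ext
    simp [AdjoinRoot.lift_mk, aeval_def]
  rw [hN, mulVec_map_injective_iff, mulVec_map_mk_injective_iff]

end Matrix

/-- The divisibility form of "`N(λ₀)` has full column rank at every `λ₀`". -/
def HasNoFiniteZeros {ι κ : Type*} [Fintype κ] (N : Matrix ι κ F[X]) : Prop :=
  ∀ g : F[X], g ≠ 0 → ∀ p : κ → F[X], (∀ i, g ∣ (N *ᵥ p) i) → ∀ j, g ∣ p j

theorem hasNoFiniteZeros_iff {ι κ : Type*} [Finite ι] [Fintype κ] (N : Matrix ι κ F[X]) :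
    HasNoFiniteZeros N ↔ ∀ x : AlgebraicClosure F, Function.Injective (N.map (aeval x)).mulVec := by
  constructor
  · intro hN x
    have hx : IsIntegral F x := Algebra.IsIntegral.isIntegral x
    rw [mulVec_map_aeval_injective_iff (minpoly.irreducible hx) (minpoly.aeval F x)]
    exact hN _ (minpoly.ne_zero hx)
  · intro hN g hg
    induction g using WfDvdMonoid.induction_on_irreducible with
    | zero => exact absurd rfl hg
    | unit u hu => exact fun _ _ _ => hu.dvd
    | mul a π ha hπ ih =>
      intro p hp j
      obtain ⟨x, hx⟩ := IsAlgClosed.exists_aeval_eq_zero (AlgebraicClosure F) π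
        (degree_pos_of_irreducible hπ).ne'
      have hπp := (mulVec_map_aeval_injective_iff hπ hx N).1 (hN x) p
        fun i => (dvd_mul_right π a).trans (hp i)
      choose q hq using hπp
      obtain rfl : p = π • q := funext hq
      have haq (i : ι) : a ∣ (N *ᵥ q) i := by
        rw [← mul_dvd_mul_iff_left hπ.ne_zero]
        simpa [mulVec_smul] using hp i
      exact mul_dvd_mul_left π (ih ha q haq j)

section ColumnDegrees

variable {ι : Type*} [Fintype ι] {l : ℕ}

theorem natDegree_le_colDegNat (N : Matrix ι (Fin l) F[X]) (i : ι) (j : Fin l) :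
    (N i j).natDegree ≤ colDegNat N j :=
  Finset.le_sup (f := fun i => (N i j).natDegree) (Finset.mem_univ i)

theorem natDegree_mulVec_le {N : Matrix ι (Fin l) F[X]} {p : Fin l → F[X]} {D : ℕ}
    (hD : ∀ j, p j ≠ 0 → (p j).natDegree + colDegNat N j ≤ D) (i : ι) :
    ((N *ᵥ p) i).natDegree ≤ D := by
  refine natDegree_sum_le_of_forall_le Finset.univ (fun j => N i j * p j) fun j _ => ?_
  by_cases hj : p j = 0
  · simp [hj]
  · have := natDegree_le_colDegNat N i j
    have := hD j hj
    exact natDegree_mul_le.trans (by omega)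

theorem coeff_mulVec_of_le {N : Matrix ι (Fin l) F[X]} {p : Fin l → F[X]} {D : ℕ}
    (hD : ∀ j, p j ≠ 0 → (p j).natDegree + colDegNat N j ≤ D) (i : ι) :
    ((N *ᵥ p) i).coeff D =
      (highestColCoeff N *ᵥ fun j => (p j).coeff (D - colDegNat N j)) i := by
  simp only [mulVec, dotProduct, finsetSum_coeff, highestColCoeff, of_apply]
  refine Finset.sum_congr rfl fun j _ => ?_
  by_cases hj : p j = 0
  · simp [hj]
  · have := hD j hj
    calc (N i j * p j).coeff D = (N i j * p j).coeff (colDegNat N j + (D - colDegNat N j)) := by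
          congr 1; omega
      _ = _ := coeff_mul_add_eq_of_natDegree_le (natDegree_le_colDegNat N i j) (by omega)

theorem exists_natDegree_mulVec_ge {N : Matrix ι (Fin l) F[X]}
    (hN : Function.Injective (highestColCoeff N).mulVec) {p : Fin l → F[X]} {j : Fin l}
    (hj : p j ≠ 0) :
    ∃ i, (N *ᵥ p) i ≠ 0 ∧ (p j).natDegree + colDegNat N j ≤ ((N *ᵥ p) i).natDegree := by
  classical
  obtain ⟨j₀, hj₀, hmax⟩ := Finset.exists_max_image ({k | p k ≠ 0} : Finset (Fin l))
    (fun k => (p k).natDegree + colDegNat N k) ⟨j, by simpa using hj⟩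
  have hD (k : Fin l) (hk : p k ≠ 0) :
      (p k).natDegree + colDegNat N k ≤ (p j₀).natDegree + colDegNat N j₀ :=
    hmax k (by simpa using hk)
  have htop : (highestColCoeff N *ᵥ fun k =>
      (p k).coeff ((p j₀).natDegree + colDegNat N j₀ - colDegNat N k)) ≠ 0 := by
    intro h0
    have hlead := congrFun (hN (h0.trans (mulVec_zero _).symm)) j₀
    simp only [add_tsub_cancel_right, coeff_natDegree, Pi.zero_apply] at hlead
    exact (by simpa using hj₀ : p j₀ ≠ 0) (leadingCoeff_eq_zero.1 hlead)
  obtain ⟨i, hi⟩ := Function.ne_iff.1 htop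
  rw [← coeff_mulVec_of_le hD] at hi
  exact ⟨i, fun h => hi (by simp [h]), (hD j hj).trans (le_natDegree_of_ne_zero hi)⟩

theorem mulVec_injective_of_highestColCoeff {N : Matrix ι (Fin l) F[X]}
    (hN : Function.Injective (highestColCoeff N).mulVec) : Function.Injective N.mulVec := by
  rw [← coe_mulVecLin, injective_iff_map_eq_zero]
  intro p hp
  by_contra hp0
  obtain ⟨j, hj⟩ := Function.ne_iff.1 hp0
  obtain ⟨i, hi, -⟩ := exists_natDegree_mulVec_ge hN hj
  exact hi (congrFun hp i)

theorem matOrder_le_matOrder_mul {N : Matrix ι (Fin l) F[X]}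
    (hN : Function.Injective (highestColCoeff N).mulVec) {Q : Matrix (Fin l) (Fin l) F[X]}
    (hQ : Q.det ≠ 0) : matOrder N ≤ matOrder (N * Q) := by
  obtain ⟨σ, hσ⟩ := exists_perm_forall_ne_zero_of_det_ne_zero hQ
  have hdeg (k : Fin l) : colDegNat N (σ k) ≤ colDegNat (N * Q) k := by
    obtain ⟨i, -, hi⟩ := exists_natDegree_mulVec_ge hN (p := Q.col k) (hσ k)
    calc colDegNat N (σ k) ≤ (Q (σ k) k).natDegree + colDegNat N (σ k) := Nat.le_add_left _ _
      _ ≤ ((N * Q) i k).natDegree := hi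
      _ ≤ colDegNat (N * Q) k := natDegree_le_colDegNat _ i k
  calc matOrder N = ∑ k, colDegNat N (σ k) := (Equiv.sum_comp σ _).symm
    _ ≤ matOrder (N * Q) := Finset.sum_le_sum fun k _ => hdeg k

theorem matOrder_updateCol_lt (N : Matrix ι (Fin l) F[X]) {j : Fin l} {u : ι → F[X]}
    (hj : 0 < colDegNat N j) (hu : ∀ i, (u i).natDegree < colDegNat N j) :
    matOrder (N.updateCol j u) < matOrder N := by
  have hcol (k : Fin l) : colDegNat (N.updateCol j u) k =
      if k = j then Finset.univ.sup fun i => (u i).natDegree else colDegNat N k := by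
    split_ifs with hk <;> simp [colDegNat, hk]
  have hlt : colDegNat (N.updateCol j u) j < colDegNat N j := by
    rw [hcol, if_pos rfl, Finset.sup_lt_iff hj]
    exact fun i _ => hu i
  refine Finset.sum_lt_sum (fun k _ => ?_) ⟨j, Finset.mem_univ j, hlt⟩
  by_cases hk : k = j
  · exact hk ▸ hlt.le
  · rw [hcol, if_neg hk]

end ColumnDegrees

section RationalSpan

variable {ι : Type*} {l : ℕ}

theorem linearIndependent_toRF_col_iff [Finite ι] (N : Matrix ι (Fin l) F[X]) :
    LinearIndependent (RatFunc F) (toRF N).col ↔ Function.Injective N.mulVec := by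
  rw [mulVec_injective_iff]
  exact linearIndependent_algebraMap_comp_iff (R := F[X]) (S := RatFunc F) (v := N.col)

theorem toRF_mulVec (N : Matrix ι (Fin l) F[X]) (p : Fin l → F[X]) :
    toRF N *ᵥ (algebraMap F[X] (RatFunc F) ∘ p) = algebraMap F[X] (RatFunc F) ∘ (N *ᵥ p) :=
  funext fun i => (RingHom.map_mulVec _ _ _ i).symm

theorem finrank_spanCols {N : Matrix ι (Fin l) F[X]}
    (hN : LinearIndependent (RatFunc F) (toRF N).col) :
    Module.finrank (RatFunc F) (spanCols N) = l :=
  (finrank_span_eq_card hN).trans (Fintype.card_fin l)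

theorem HasNoFiniteZeros.exists_eq_mulVec {N : Matrix ι (Fin l) F[X]} (hN : HasNoFiniteZeros N)
    {v : ι → F[X]} (hv : algebraMap F[X] (RatFunc F) ∘ v ∈ spanCols N) :
    ∃ p, v = N *ᵥ p := by
  rw [spanCols, ← col_def, ← range_mulVecLin] at hv
  obtain ⟨c, hc⟩ := hv
  obtain ⟨b, hb⟩ := IsLocalization.exist_integer_multiples_of_finite (nonZeroDivisors F[X]) c
  choose p hp using hb
  have hb0 : (b : F[X]) ≠ 0 := nonZeroDivisors.ne_zero b.2
  have hbv : (b : F[X]) • v = N *ᵥ p := by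
    refine (IsFractionRing.injective F[X] (RatFunc F)).comp_left
      (?_ : algebraMap _ _ ∘ ((b : F[X]) • v) = algebraMap _ _ ∘ (N *ᵥ p))
    rw [← toRF_mulVec, show algebraMap _ _ ∘ p = (b : F[X]) • c from funext hp, mulVec_smul,
      ← mulVecLin_apply, hc]
    ext i
    simp [Algebra.smul_def]
  choose q hq using hN b hb0 p fun i => ⟨v i, (congrFun hbv i).symm⟩
  refine ⟨q, smul_right_injective _ hb0 (?_ : (b : F[X]) • v = (b : F[X]) • (N *ᵥ q))⟩
  rw [hbv, funext hq, ← mulVec_smul]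
  rfl

theorem HasNoFiniteZeros.exists_eq_mul {N : Matrix ι (Fin l) F[X]} (hN : HasNoFiniteZeros N)
    {l' : ℕ} {N' : Matrix ι (Fin l') F[X]} (h : spanCols N' ≤ spanCols N) :
    ∃ Q : Matrix (Fin l) (Fin l') F[X], N' = N * Q := by
  have hcol (k : Fin l') : ∃ q, N'.col k = N *ᵥ q :=
    hN.exists_eq_mulVec (h (Submodule.subset_span ⟨k, rfl⟩))
  choose q hq using hcol
  exact ⟨of fun j k => q k j, ext fun i k => congrFun (hq k) i⟩

end RationalSpan

section MinimalBasis

variable {ι : Type*} [Fintype ι] {l : ℕ} {V : Submodule (RatFunc F) (ι → RatFunc F)}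
  {N : Matrix ι (Fin l) F[X]}

/-- Exchanging column `j` for `u` gives another basis of `V`, of smaller order if `u` had lower
degree. -/
theorem IsMinimalBasisOf.exists_colDegNat_le_natDegree (h : IsMinimalBasisOf V N)
    {u : ι → F[X]} {s : Fin l → RatFunc F} {j : Fin l} (hs : s j ≠ 0)
    (hu : toRF N *ᵥ s = algebraMap F[X] (RatFunc F) ∘ u) :
    ∃ i, u i ≠ 0 ∧ colDegNat N j ≤ (u i).natDegree := by
  obtain ⟨hli, rfl, hmin⟩ := h
  have htoRF : toRF (N.updateCol j u) = (toRF N).updateCol j (toRF N *ᵥ s) := by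
    rw [hu]
    exact map_updateCol _
  have hli' : LinearIndependent (RatFunc F) (toRF (N.updateCol j u)).col :=
    htoRF ▸ linearIndependent_col_updateCol_mulVec hli hs
  have hspan : spanCols (N.updateCol j u) = spanCols N := by
    refine Submodule.eq_of_le_of_finrank_eq ?_ ((finrank_spanCols hli').trans
      (finrank_spanCols hli).symm)
    rw [spanCols, Submodule.span_le, ← col_def, htoRF, col_updateCol]
    rintro _ ⟨k, rfl⟩
    by_cases hk : k = j
    · subst hk
      rw [Function.update_self, spanCols, ← col_def, ← range_mulVecLin]
      exact ⟨s, rfl⟩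
    · rw [Function.update_of_ne hk]
      exact Submodule.subset_span ⟨k, rfl⟩
  obtain ⟨i₀, hi₀⟩ : ∃ i, u i ≠ 0 := by
    by_contra! hu0
    refine hli'.ne_zero j ?_
    rw [htoRF, col_updateCol, Function.update_self, hu]
    ext i
    simp [hu0]
  by_contra! hlt
  have hdeg (i : ι) : (u i).natDegree < colDegNat N j := by
    by_cases hi : u i = 0
    · simpa [hi] using (Nat.zero_le _).trans_lt (hlt i₀ hi₀)
    · exact hlt i hi
  exact (hmin l _ hli' hspan).not_gt
    (matOrder_updateCol_lt N ((Nat.zero_le _).trans_lt (hdeg i₀)) hdeg)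

theorem IsMinimalBasisOf.highestColCoeff_mulVec_injective (h : IsMinimalBasisOf V N) :
    Function.Injective (highestColCoeff N).mulVec := by
  classical
  rw [← coe_mulVecLin, injective_iff_map_eq_zero]
  intro c hc
  by_contra hc0
  obtain ⟨j, hj, hmax⟩ := Finset.exists_max_image ({k | c k ≠ 0} : Finset (Fin l))
    (colDegNat N) (by simpa [Finset.Nonempty, Function.ne_iff] using hc0)
  simp only [Finset.mem_filter, Finset.mem_univ, true_and] at hj hmax
  set p : Fin l → F[X] := fun k => C (c k) * X ^ (colDegNat N j - colDegNat N k)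
  have hD (k : Fin l) (hk : p k ≠ 0) : (p k).natDegree + colDegNat N k ≤ colDegNat N j := by
    have hck : c k ≠ 0 := fun h0 => hk (by simp [p, h0])
    rw [natDegree_C_mul_X_pow _ _ hck]
    have := hmax k hck
    omega
  have htop (i : ι) : ((N *ᵥ p) i).coeff (colDegNat N j) = 0 := by
    rw [coeff_mulVec_of_le hD]
    simpa [p, coeff_C_mul_X_pow] using congrFun hc i
  obtain ⟨i, hi, hdeg⟩ := h.exists_colDegNat_le_natDegree (u := N *ᵥ p) (j := j)
    (by simpa [p] using hj) (toRF_mulVec N p)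
  have hnat := le_antisymm (natDegree_mulVec_le hD i) hdeg
  exact hi (leadingCoeff_eq_zero.1 (by rw [leadingCoeff, hnat, htop]))

theorem IsMinimalBasisOf.eq_zero_of_dvd_mulVec (h : IsMinimalBasisOf V N) {g : F[X]}
    {p : Fin l → F[X]} (hp : ∀ k, (p k).degree < g.degree) (hdvd : ∀ i, g ∣ (N *ᵥ p) i) :
    p = 0 := by
  classical
  by_contra hp0
  obtain ⟨j, hj, hmax⟩ := Finset.exists_max_image ({k | p k ≠ 0} : Finset (Fin l))
    (colDegNat N) (by simpa [Finset.Nonempty, Function.ne_iff] using hp0)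
  simp only [Finset.mem_filter, Finset.mem_univ, true_and] at hj hmax
  have hg : g ≠ 0 := by
    rintro rfl
    simpa using hp j
  have hgj := natDegree_lt_natDegree hj (hp j)
  have hD (k : Fin l) (hk : p k ≠ 0) :
      (p k).natDegree + colDegNat N k ≤ g.natDegree - 1 + colDegNat N j := by
    have := natDegree_lt_natDegree hk (hp k)
    have := hmax k hk
    omega
  choose q hq using hdvd
  have hinj := IsFractionRing.injective F[X] (RatFunc F)
  have hg' : algebraMap F[X] (RatFunc F) g ≠ 0 := (map_ne_zero_iff _ hinj).2 hg
  obtain ⟨i, hi, hdeg⟩ := h.exists_colDegNat_le_natDegree (u := q) (j := j)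
    (s := (algebraMap F[X] (RatFunc F) g)⁻¹ • (algebraMap F[X] (RatFunc F) ∘ p))
    (mul_ne_zero (inv_ne_zero hg') ((map_ne_zero_iff _ hinj).2 hj))
    (by
      rw [mulVec_smul, toRF_mulVec]
      ext i
      simp [hq, inv_mul_cancel_left₀ hg'])
  have := natDegree_mulVec_le hD i
  rw [hq i, natDegree_mul hg hi] at this
  omega

theorem IsMinimalBasisOf.hasNoFiniteZeros (h : IsMinimalBasisOf V N) : HasNoFiniteZeros N := by
  intro g hg p hp j
  have hmod : (fun k => p k % g) = p - g • fun k => p k / g :=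
    funext fun k => EuclideanDomain.mod_eq_sub_mul_div _ _
  refine EuclideanDomain.mod_eq_zero.1 (congrFun (h.eq_zero_of_dvd_mulVec
    (fun k => degree_mod_lt _ hg) fun i => ?_) j)
  rw [hmod, mulVec_sub, mulVec_smul]
  exact dvd_sub (hp i) (dvd_mul_right _ _)

theorem isMinimalBasisOf_spanCols (hN : HasNoFiniteZeros N)
    (hred : Function.Injective (highestColCoeff N).mulVec) : IsMinimalBasisOf (spanCols N) N := by
  have hli := (linearIndependent_toRF_col_iff N).2 (mulVec_injective_of_highestColCoeff hred)
  refine ⟨hli, rfl, fun l' N' hli' hspan => ?_⟩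
  obtain rfl : l' = l := (finrank_spanCols hli').symm.trans (hspan ▸ finrank_spanCols hli)
  obtain ⟨Q, rfl⟩ := hN.exists_eq_mul hspan.le
  refine matOrder_le_matOrder_mul hred fun hQ => ?_
  obtain ⟨c, hc0, hc⟩ := exists_mulVec_eq_zero_iff.2 hQ
  refine hc0 ((linearIndependent_toRF_col_iff _).1 hli' ?_)
  rw [← mulVec_mulVec, hc, mulVec_zero, mulVec_zero]

end MinimalBasis

/-- **Forney's criterion.** The columns of a polynomial matrix `N` form a
minimal basis of the subspace they span if and only if `N(λ₀)` has full column rank for every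
`λ₀` in the algebraic closure of `F` and `N` is column reduced. -/
theorem isMinimalBasis_iff_fullRank_and_columnReduced
    {m l : ℕ} (N : Matrix (Fin m) (Fin l) (Polynomial F)) :
    IsMinimalBasisOf (spanCols N) N ↔
      ((∀ lam : AlgebraicClosure F, (N.map fun f => Polynomial.aeval lam f).rank = l) ∧
        (highestColCoeff N).rank = l) := by
  simp only [rank_eq_iff_mulVec_injective, ← hasNoFiniteZeros_iff]
  exact ⟨fun h => ⟨h.hasNoFiniteZeros, h.highestColCoeff_mulVec_injective⟩,
    fun h => isMinimalBasisOf_spanCols h.1 h.2⟩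

end
end

section
/- Let D(λ) = D_qλ^q + ⋯ + D_1λ + D_0 ∈ F[λ]^{p×p} and let M(λ) = M_1λ + M_0 ∈ F[λ]^{(η+1)p×(ε+1)p} be partitioned into (η+1)×(ε+1) blocks of size p×p, with q = ε + η + 1. Then (Λ_η(λ)⊗I_p)·M(λ)·(Λ_ε(λ)^T⊗I_p) = D(λ) if and only if for each k = 0,1,…,q: Σ_{i+j = q+2-k}[M_1]_{ij} + Σ_{i+j = q+1-k}[M_0]_{ij} = D_k (the antidiagonal sum condition). In particular, [M_0]_{η+1, ε+1} = D_0. -/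
/-!
`Λ_k ⊗ I_p` picks out blocks, so the `(a, b)` entry of the product is
`∑_{i,j} λ^{η-i} (λ [M₁]_{ij} + [M₀]_{ij}) λ^{ε-j}`. Its coefficient of `λ^k` collects the
entries of `M₁` with `(η - i) + (ε - j) + 1 = k` and of `M₀` with `(η - i) + (ε - j) = k`,
i.e. `i + j + k = q` and `i + j + k + 1 = q` (0-based). Comparing coefficients gives the
equivalence; for `k = 0` only the corner block `[M₀]_{η,ε}` survives.
-/

open Polynomial Matrix Kronecker

noncomputable section

variable {F : Type*} [Field F]

/-- A linear pencil built from two constant matrices: `λ M₁ + M₀`. -/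
def pencilMat {a b : Type*} (M₁ M₀ : Matrix a b F) : Matrix a b (Polynomial F) :=
  Matrix.of fun i j => Polynomial.C (M₁ i j) * Polynomial.X + Polynomial.C (M₀ i j)

/-- The row vector `Λ_k(λ) = [λ^k, λ^{k-1}, …, λ, 1]`. -/
def Lamk (F : Type*) [Field F] (k : ℕ) : Matrix (Fin 1) (Fin (k + 1)) (Polynomial F) :=
  Matrix.of fun _ j => Polynomial.X ^ (k - (j : ℕ))

/-- The `(i,j)` block of size `p × p` of a block-partitioned matrix. -/
def blockOf {a b p : ℕ} (M : Matrix (Fin a × Fin p) (Fin b × Fin p) F)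
    (i : Fin a) (j : Fin b) : Matrix (Fin p) (Fin p) F :=
  Matrix.of fun x y => M (i, x) (j, y)


section Polynomial

variable {R : Type*} [Semiring R]

theorem coeff_sum_fin_C_mul_X_pow {n : ℕ} (f : Fin n → R) (m : ℕ) :
    (∑ k : Fin n, C (f k) * X ^ (k : ℕ)).coeff m = if h : m < n then f ⟨m, h⟩ else 0 := by
  simp only [finsetSum_coeff, coeff_C_mul_X_pow]
  split_ifs with h
  · rw [Finset.sum_eq_single ⟨m, h⟩ (fun k _ hk => if_neg fun e => hk (Fin.ext e.symm))
      (by simp), if_pos rfl]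
  · exact Finset.sum_eq_zero fun k _ => if_neg fun e : m = k => h (e ▸ k.isLt)

theorem sum_fin_C_mul_X_pow_inj {n : ℕ} {f g : Fin n → R} :
    ∑ k : Fin n, C (f k) * X ^ (k : ℕ) = ∑ k : Fin n, C (g k) * X ^ (k : ℕ) ↔ f = g := by
  refine ⟨fun h => funext fun k => ?_, fun h => h ▸ rfl⟩
  simpa only [coeff_sum_fin_C_mul_X_pow, k.isLt, dif_pos] using congrArg (coeff · k) h

end Polynomial

theorem kronecker_one_mul_mul_kronecker_one_transpose_apply {R : Type*} [CommSemiring R]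
    {p m n : ℕ} (u : Matrix (Fin 1) (Fin m) R) (v : Matrix (Fin 1) (Fin n) R)
    (N : Matrix (Fin m × Fin p) (Fin n × Fin p) R) (a b : Fin p) :
    ((u ⊗ₖ (1 : Matrix (Fin p) (Fin p) R)) * N * (v ⊗ₖ (1 : Matrix (Fin p) (Fin p) R))ᵀ)
        (0, a) (0, b) = ∑ i, ∑ j, u 0 i * N (i, a) (j, b) * v 0 j := by
  simpa [Matrix.mul_apply, Matrix.one_apply, Fintype.sum_prod_type, Finset.sum_mul]
    using Finset.sum_comm

section Pencil

variable {p ε η : ℕ}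

/-- Blocks are indexed from `0` here, so `i + j + k = q` is the paper's `i + j = q + 2 - k`. -/
def antidiagonalSum (q : ℕ) (M₁ M₀ : Matrix (Fin (η + 1) × Fin p) (Fin (ε + 1) × Fin p) F)
    (k : ℕ) : Matrix (Fin p) (Fin p) F :=
  (∑ i : Fin (η + 1), ∑ j : Fin (ε + 1),
      if (i : ℕ) + (j : ℕ) + k = q then blockOf M₁ i j else 0) +
    (∑ i : Fin (η + 1), ∑ j : Fin (ε + 1),
      if (i : ℕ) + (j : ℕ) + k + 1 = q then blockOf M₀ i j else 0)

variable {q : ℕ} (M₁ M₀ : Matrix (Fin (η + 1) × Fin p) (Fin (ε + 1) × Fin p) F)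

theorem coeff_sandwich_pencil (hq : q = ε + η + 1) (a b : Fin p) (n : ℕ) :
    (((Lamk F η ⊗ₖ (1 : Matrix (Fin p) (Fin p) F[X])) * pencilMat M₁ M₀ *
        (Lamk F ε ⊗ₖ (1 : Matrix (Fin p) (Fin p) F[X]))ᵀ) (0, a) (0, b)).coeff n =
      antidiagonalSum q M₁ M₀ n a b := by
  rw [kronecker_one_mul_mul_kronecker_one_transpose_apply]
  have hterm : ∀ (i : Fin (η + 1)) (j : Fin (ε + 1)),
      (Lamk F η 0 i * pencilMat M₁ M₀ (i, a) (j, b) * Lamk F ε 0 j).coeff n =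
        (if (i : ℕ) + j + n = q then M₁ (i, a) (j, b) else 0) +
          if (i : ℕ) + j + n + 1 = q then M₀ (i, a) (j, b) else 0 := by
    intro i j
    have hexp : Lamk F η 0 i * pencilMat M₁ M₀ (i, a) (j, b) * Lamk F ε 0 j =
        C (M₁ (i, a) (j, b)) * X ^ (η - i + (ε - j) + 1) +
          C (M₀ (i, a) (j, b)) * X ^ (η - i + (ε - j)) := by
      simp only [Lamk, pencilMat, of_apply]
      ring
    rw [hexp, coeff_add, coeff_C_mul_X_pow, coeff_C_mul_X_pow]
    congr 2 <;> exact propext (by omega)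
  simp only [finsetSum_coeff, hterm, antidiagonalSum, Matrix.add_apply, Matrix.sum_apply,
    Finset.sum_add_distrib, Matrix.ite_apply, Matrix.zero_apply, blockOf, of_apply]

theorem antidiagonalSum_eq_zero_of_lt {k : ℕ} (hk : q < k) :
    antidiagonalSum q M₁ M₀ k = 0 := by
  have hfar : ∀ (i : Fin (η + 1)) (j : Fin (ε + 1)),
      (i : ℕ) + j + k ≠ q ∧ (i : ℕ) + j + k + 1 ≠ q :=
    fun i j => by omega
  simp [antidiagonalSum, hfar]

theorem antidiagonalSum_zero (hq : q = ε + η + 1) :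
    antidiagonalSum q M₁ M₀ 0 = blockOf M₀ (Fin.last η) (Fin.last ε) := by
  have hcorner : ∀ (i : Fin (η + 1)) (j : Fin (ε + 1)),
      (i : ℕ) + j + 1 = q ↔ i = Fin.last η ∧ j = Fin.last ε := by
    intro i j
    simp only [Fin.ext_iff, Fin.val_last]
    omega
  have hnone : ∀ (i : Fin (η + 1)) (j : Fin (ε + 1)), (i : ℕ) + j ≠ q :=
    fun i j => by omega
  simp [antidiagonalSum, hcorner, hnone, ite_and]

theorem sandwich_pencil_apply_eq_sum (hq : q = ε + η + 1) (a b : Fin p) :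
    ((Lamk F η ⊗ₖ (1 : Matrix (Fin p) (Fin p) F[X])) * pencilMat M₁ M₀ *
        (Lamk F ε ⊗ₖ (1 : Matrix (Fin p) (Fin p) F[X]))ᵀ) (0, a) (0, b) =
      ∑ k : Fin (q + 1), C (antidiagonalSum q M₁ M₀ k a b) * X ^ (k : ℕ) := by
  ext n
  rw [coeff_sandwich_pencil M₁ M₀ hq, coeff_sum_fin_C_mul_X_pow]
  split_ifs with hn
  · rfl
  · rw [antidiagonalSum_eq_zero_of_lt M₁ M₀ (by omega), Matrix.zero_apply]

theorem sandwich_pencil_eq_sum_iff (hq : q = ε + η + 1)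
    (D : Fin (q + 1) → Matrix (Fin p) (Fin p) F) :
    (∀ a b : Fin p,
        ((Lamk F η ⊗ₖ (1 : Matrix (Fin p) (Fin p) F[X])) * pencilMat M₁ M₀ *
          (Lamk F ε ⊗ₖ (1 : Matrix (Fin p) (Fin p) F[X]))ᵀ) (0, a) (0, b) =
          ∑ k : Fin (q + 1), C (D k a b) * X ^ (k : ℕ)) ↔
      ∀ k : Fin (q + 1), antidiagonalSum q M₁ M₀ k = D k := by
  simp only [sandwich_pencil_apply_eq_sum M₁ M₀ hq, sum_fin_C_mul_X_pow_inj, funext_iff]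
  exact ⟨fun h k => Matrix.ext fun a b => h a b k, fun h a b k => by rw [h k]⟩

end Pencil

/-- **antidiagonal sum condition.** For a polynomial matrix
`D(λ) = Σ_{k=0}^{q} D_k λ^k` with `q = ε + η + 1` and a block pencil `M(λ) = M₁λ + M₀`
partitioned into `(η+1) × (ε+1)` blocks of size `p × p`, one has
`(Λ_η(λ) ⊗ I_p) M(λ) (Λ_ε(λ)ᵀ ⊗ I_p) = D(λ)` if and only if, for every `k = 0, …, q`,
`Σ_{i+j = q+2-k} [M₁]_{ij} + Σ_{i+j = q+1-k} [M₀]_{ij} = D_k` (indices `1`-based).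
In particular, `[M₀]_{η+1, ε+1} = D₀`. -/
theorem antidiagonal_sum_condition
    {p ε η q : ℕ} (hq : q = ε + η + 1)
    (Dco : Fin (q + 1) → Matrix (Fin p) (Fin p) F)
    (M₁ M₀ : Matrix (Fin (η + 1) × Fin p) (Fin (ε + 1) × Fin p) F) :
    (((∀ a b : Fin p,
        ((Lamk F η ⊗ₖ (1 : Matrix (Fin p) (Fin p) (Polynomial F))) * pencilMat M₁ M₀ *
          (Lamk F ε ⊗ₖ (1 : Matrix (Fin p) (Fin p) (Polynomial F)))ᵀ)
            ((0 : Fin 1), a) ((0 : Fin 1), b) =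
          ∑ k : Fin (q + 1), Polynomial.C (Dco k a b) * Polynomial.X ^ (k : ℕ)) ↔
      (∀ k : Fin (q + 1),
        (∑ i : Fin (η + 1), ∑ j : Fin (ε + 1),
          if (i : ℕ) + (j : ℕ) + (k : ℕ) = q then blockOf M₁ i j else 0) +
        (∑ i : Fin (η + 1), ∑ j : Fin (ε + 1),
          if (i : ℕ) + (j : ℕ) + (k : ℕ) + 1 = q then blockOf M₀ i j else 0) = Dco k)) ∧
    ((∀ a b : Fin p,
        ((Lamk F η ⊗ₖ (1 : Matrix (Fin p) (Fin p) (Polynomial F))) * pencilMat M₁ M₀ *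
          (Lamk F ε ⊗ₖ (1 : Matrix (Fin p) (Fin p) (Polynomial F)))ᵀ)
            ((0 : Fin 1), a) ((0 : Fin 1), b) =
          ∑ k : Fin (q + 1), Polynomial.C (Dco k a b) * Polynomial.X ^ (k : ℕ)) →
      blockOf M₀ ⟨η, Nat.lt_succ_self η⟩ ⟨ε, Nat.lt_succ_self ε⟩ =
        Dco ⟨0, Nat.succ_pos q⟩)) := by
  have hcond := sandwich_pencil_eq_sum_iff M₁ M₀ hq Dco
  exact ⟨hcond, fun h => (antidiagonalSum_zero M₁ M₀ hq).symm.trans (hcond.1 h 0)⟩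

end
end
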